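/- arXiv:2008.12379 — 6 statements merged into one kernel-verified Lean document; each statement's English description precedes it below -/
import Mathlib

section
/- Let W₁⟨r₁,s₁⟩ and W₂⟨r₂,s₂⟩ be windows with 0 < s₁ ≤ r₁, 0 < s₂ ≤ r₂ and r₁ > r₂. Then W₁ is covered by W₂ if and only if (1) s₁ is a multiple of s₂ and (2) r₁ − r₂ is a multiple of s₂. -/
/-- The interval `[a, b)` belongs to the window `W⟨r, s⟩`,
i.e. `a = m·s` and `b = m·s + r` for some `m : ℕ`. -/
def IsWindowInterval (r s a b : ℕ) : Prop :=
  ∃ m : ℕ, a = m * s ∧ b = m * s + r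

/-- `W₁⟨r₁,s₁⟩` is (strictly) covered by `W₂⟨r₂,s₂⟩`: for every interval `[a,b)` of `W₁`
there are intervals `[a,x)` and `[y,b)` of `W₂` with `x < b` and `a < y`. -/
def StrictlyCovered (r₁ s₁ r₂ s₂ : ℕ) : Prop :=
  ∀ a b : ℕ, IsWindowInterval r₁ s₁ a b →
    (∃ x, IsWindowInterval r₂ s₂ a x ∧ x < b) ∧
    (∃ y, IsWindowInterval r₂ s₂ y b ∧ a < y)

/-- Theorem 1 (window coverage): `W₁` is covered by `W₂` iff `s₂ ∣ s₁` and `s₂ ∣ r₁ - r₂`. -/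
theorem window_coverage_iff (r₁ s₁ r₂ s₂ : ℕ)
    (hs₁ : 0 < s₁) (hsr₁ : s₁ ≤ r₁) (hs₂ : 0 < s₂) (hsr₂ : s₂ ≤ r₂)
    (hr : r₂ < r₁) :
    StrictlyCovered r₁ s₁ r₂ s₂ ↔ s₂ ∣ s₁ ∧ s₂ ∣ (r₁ - r₂) := by
  constructor
  · intro h
    constructor
    · obtain ⟨⟨x, ⟨k, hk1, hk2⟩, hx⟩, -⟩ := h s₁ (s₁ + r₁) ⟨1, by ring, by ring⟩
      exact ⟨k, by rw [hk1, mul_comm]⟩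
    · obtain ⟨-, ⟨y, ⟨k, hk1, hk2⟩, hy⟩⟩ := h 0 r₁ ⟨0, by simp, by simp⟩
      exact ⟨k, by rw [hk2, Nat.add_sub_cancel, mul_comm]⟩
  · rintro ⟨⟨c, hc⟩, ⟨d, hd⟩⟩ a b ⟨m, rfl, rfl⟩
    constructor
    · refine ⟨m * s₁ + r₂, ⟨m * c, ?_, ?_⟩, by omega⟩
      · rw [hc]; ring
      · rw [hc]; ring
    · refine ⟨m * s₁ + (r₁ - r₂), ⟨m * c + d, ?_, ?_⟩, by omega⟩
      · rw [add_mul, hd, hc]; ring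
      · rw [hc, add_mul, mul_comm d s₂, ← hd, add_assoc, Nat.sub_add_cancel hr.le]; ring
end

section
/- The window coverage relation is transitive: if W₁ ≤ W₂ and W₂ ≤ W₃, then W₁ ≤ W₃. -/
/-- The window coverage relation: `W₁ ≤ W₂` iff `W₁ = W₂`, or `r₁ > r₂` and `W₁` is
strictly covered by `W₂`. -/
def Covered (r₁ s₁ r₂ s₂ : ℕ) : Prop :=
  (r₁ = r₂ ∧ s₁ = s₂) ∨ (r₂ < r₁ ∧ StrictlyCovered r₁ s₁ r₂ s₂)

/-- The window coverage relation is transitive. -/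
theorem covered_trans (r₁ s₁ r₂ s₂ r₃ s₃ : ℕ)
    (hs₁ : 0 < s₁) (hsr₁ : s₁ ≤ r₁) (hs₂ : 0 < s₂) (hsr₂ : s₂ ≤ r₂)
    (hs₃ : 0 < s₃) (hsr₃ : s₃ ≤ r₃)
    (h₁₂ : Covered r₁ s₁ r₂ s₂) (h₂₃ : Covered r₂ s₂ r₃ s₃) :
    Covered r₁ s₁ r₃ s₃ := by
  rcases h₁₂ with ⟨hr, hs⟩ | ⟨hr₁₂, hc₁₂⟩
  · subst hr; subst hs; exact h₂₃
  rcases h₂₃ with ⟨hr, hs⟩ | ⟨hr₂₃, hc₂₃⟩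
  · subst hr; subst hs; exact Or.inr ⟨hr₁₂, hc₁₂⟩
  refine Or.inr ⟨hr₂₃.trans hr₁₂, fun a b hab => ?_⟩
  obtain ⟨⟨x, hx, hxb⟩, ⟨y, hy, hay⟩⟩ := hc₁₂ a b hab
  obtain ⟨⟨x', hx', hx'x⟩, -⟩ := hc₂₃ a x hx
  obtain ⟨-, ⟨y', hy', hyy'⟩⟩ := hc₂₃ y b hy
  exact ⟨⟨x', hx', hx'x.trans hxb⟩, ⟨y', hy', hay.trans hyy'⟩⟩
end

section
/- If the window W₁⟨r₁,s₁⟩ is strictly covered by the window W₂⟨r₂,s₂⟩, then for every interval I = [a,b) in W₁, the cardinality of the covering set of I in W₂ equals 1 + (r₁ − r₂)/s₂. In particular, this cardinality (the covering multiplier M(W₁,W₂)) is independent of the choice of the interval I. -/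
/-- The covering set of the interval `[a,b)` in the window `W₂⟨r₂,s₂⟩`:
all intervals `[u,v)` of `W₂` with `a ≤ u` and `v ≤ b`, identified with pairs `(u,v)`. -/
def CoveringSet (r₂ s₂ a b : ℕ) : Set (ℕ × ℕ) :=
  {p | IsWindowInterval r₂ s₂ p.1 p.2 ∧ a ≤ p.1 ∧ p.2 ≤ b}

/-- Theorem 3 (covering multiplier): if `W₁` is strictly covered by `W₂`, then for every
interval `[a,b)` of `W₁` the covering set has exactly `1 + (r₁ - r₂)/s₂` elements;
in particular this cardinality is independent of the choice of interval. -/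
theorem covering_multiplier (r₁ s₁ r₂ s₂ : ℕ)
    (hs₁ : 0 < s₁) (hsr₁ : s₁ ≤ r₁) (hs₂ : 0 < s₂) (hsr₂ : s₂ ≤ r₂)
    (hr : r₂ < r₁) (hcov : StrictlyCovered r₁ s₁ r₂ s₂) :
    ∀ a b : ℕ, IsWindowInterval r₁ s₁ a b →
      (CoveringSet r₂ s₂ a b).ncard = 1 + (r₁ - r₂) / s₂ := by
  intro a b hI
  obtain ⟨⟨x, ⟨k, hka, hkx⟩, hxb⟩, ⟨y, ⟨k', hky, hkb⟩, hay⟩⟩ := hcov a b hI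
  obtain ⟨m, ham, hbm⟩ := hI
  -- b = a + r₁
  have hb : b = a + r₁ := by omega
  have hkk' : k ≤ k' := by
    have : k * s₂ < k' * s₂ := by omega
    exact le_of_lt (Nat.lt_of_mul_lt_mul_right this)
  have hdiff : (k' - k) * s₂ = r₁ - r₂ := by
    have : k' * s₂ + r₂ = k * s₂ + r₁ := by omega
    rw [Nat.sub_mul]; omega
  have hdiv : (r₁ - r₂) / s₂ = k' - k := by
    rw [← hdiff, Nat.mul_div_cancel _ hs₂]
  have hset : CoveringSet r₂ s₂ a b =
      ↑((Finset.Icc k k').image (fun n => (n * s₂, n * s₂ + r₂))) := by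
    ext ⟨u, v⟩
    simp only [CoveringSet, Set.mem_setOf_eq, Finset.coe_image, Set.mem_image,
      Finset.mem_coe, Finset.mem_Icc, IsWindowInterval]
    constructor
    · rintro ⟨⟨n, rfl, rfl⟩, hau, hvb⟩
      refine ⟨n, ⟨?_, ?_⟩, rfl⟩
      · have : k * s₂ ≤ n * s₂ := by omega
        exact Nat.le_of_mul_le_mul_right this hs₂
      · have : n * s₂ ≤ k' * s₂ := by omega
        exact Nat.le_of_mul_le_mul_right this hs₂
    · rintro ⟨n, ⟨hkn, hnk'⟩, h⟩
      obtain ⟨rfl, rfl⟩ := Prod.mk.injEq .. ▸ h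
      refine ⟨⟨n, rfl, rfl⟩, ?_, ?_⟩
      · have := Nat.mul_le_mul_right s₂ hkn; omega
      · have := Nat.mul_le_mul_right s₂ hnk'; omega
  rw [hset, Set.ncard_coe_finset, Finset.card_image_of_injective _ ?_,
    Nat.card_Icc, hdiv]
  · omega
  · intro p q hpq
    have : p * s₂ = q * s₂ := (Prod.mk.injEq .. ▸ hpq).1
    exact Nat.eq_of_mul_eq_mul_right hs₂ this
end

section
/- If the window W₁⟨r₁,s₁⟩ is strictly covered by the window W₂⟨r₂,s₂⟩, then every interval I = [a,b) in W₁ equals the union of the intervals in its covering set in W₂, i.e., I = ⋃_{J ∈ 𝓘_{a,b}} J where 𝓘_{a,b} = {[u,v) in W₂ : a ≤ u and v ≤ b}. -/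
/-- If `W₁` is strictly covered by `W₂`, then each interval `[a,b)` of `W₁` is the
union of the intervals in its covering set in `W₂`. -/
theorem interval_eq_union_coveringSet (r₁ s₁ r₂ s₂ : ℕ)
    (hs₁ : 0 < s₁) (hsr₁ : s₁ ≤ r₁) (hs₂ : 0 < s₂) (hsr₂ : s₂ ≤ r₂)
    (hr : r₂ < r₁) (hcov : StrictlyCovered r₁ s₁ r₂ s₂) :
    ∀ a b : ℕ, IsWindowInterval r₁ s₁ a b →
      Set.Ico a b = ⋃ p ∈ CoveringSet r₂ s₂ a b, Set.Ico p.1 p.2 := by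
  intro a b hab
  obtain ⟨⟨x, ⟨m₀, ha, hx⟩, hxb⟩, ⟨y, ⟨m₁, hy, hb⟩, hay⟩⟩ := hcov a b hab
  ext t
  simp only [Set.mem_Ico, Set.mem_iUnion, CoveringSet, Set.mem_setOf_eq, exists_prop]
  constructor
  · rintro ⟨hat, htb⟩
    by_cases hty : y ≤ t
    · exact ⟨(y, b), ⟨⟨m₁, hy, hb⟩, le_of_lt hay, le_refl b⟩, hty, htb⟩
    · push_neg at hty
      refine ⟨(t / s₂ * s₂, t / s₂ * s₂ + r₂), ⟨⟨t / s₂, rfl, rfl⟩, ?_, ?_⟩, ?_, ?_⟩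
      · rw [ha]
        exact Nat.mul_le_mul_right s₂ ((Nat.le_div_iff_mul_le hs₂).2 (ha ▸ hat))
      · have h1 : t / s₂ * s₂ ≤ t := Nat.div_mul_le_self t s₂
        omega
      · exact Nat.div_mul_le_self t s₂
      · have h1 := Nat.div_add_mod t s₂
        have h2 := Nat.mod_lt t hs₂
        have h3 : s₂ * (t / s₂) = t / s₂ * s₂ := Nat.mul_comm _ _
        omega
  · rintro ⟨p, ⟨⟨m, hu, hv⟩, hap, hpb⟩, htp, htp'⟩
    omega
end

section
/- Let W₁⟨r₁,s₁⟩ and W₂⟨r₂,s₂⟩ be windows with 0 < s₁ ≤ r₁, 0 < s₂ ≤ r₂ and r₁ > r₂. Then W₁ is partitioned by W₂ if and only if (1) s₁ is a multiple of s₂, (2) r₁ is a multiple of s₂, and (3) r₂ = s₂ (i.e., W₂ is a tumbling window). -/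
/-- `W₁` is partitioned by `W₂`: `W₁` is strictly covered by `W₂` and, for every interval
`I` of `W₁`, the intervals in the covering set of `I` are pairwise disjoint and their
union equals `I`. -/
def PartitionedBy (r₁ s₁ r₂ s₂ : ℕ) : Prop :=
  StrictlyCovered r₁ s₁ r₂ s₂ ∧
  ∀ a b : ℕ, IsWindowInterval r₁ s₁ a b →
    (CoveringSet r₂ s₂ a b).Pairwise
      (fun p q => Disjoint (Set.Ico p.1 p.2) (Set.Ico q.1 q.2)) ∧
    Set.Ico a b = ⋃ p ∈ CoveringSet r₂ s₂ a b, Set.Ico p.1 p.2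

/-- Theorem 4 (window partitioning): `W₁` is partitioned by `W₂` iff `s₂ ∣ s₁`,
`s₂ ∣ r₁` and `r₂ = s₂` (i.e. `W₂` is a tumbling window). -/
theorem window_partitioning_iff (r₁ s₁ r₂ s₂ : ℕ)
    (hs₁ : 0 < s₁) (hsr₁ : s₁ ≤ r₁) (hs₂ : 0 < s₂) (hsr₂ : s₂ ≤ r₂)
    (hr : r₂ < r₁) :
    PartitionedBy r₁ s₁ r₂ s₂ ↔ s₂ ∣ s₁ ∧ s₂ ∣ r₁ ∧ r₂ = s₂ := by
  constructor
  · rintro ⟨hsc, hpart⟩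
    -- s₂ ∣ s₁ from strict covering of [s₁, s₁ + r₁)
    have hI1 : IsWindowInterval r₁ s₁ s₁ (s₁ + r₁) := ⟨1, by ring, by ring⟩
    obtain ⟨⟨x, ⟨m, hm1, _⟩, _⟩, _⟩ := hsc s₁ (s₁ + r₁) hI1
    have hdvd1 : s₂ ∣ s₁ := ⟨m, by rw [hm1]; ring⟩
    -- covering set of [0, r₁)
    have hI0 : IsWindowInterval r₁ s₁ 0 r₁ := ⟨0, by ring, by ring⟩
    obtain ⟨hdisj, hun⟩ := hpart 0 r₁ hI0
    have hp0 : (0, r₂) ∈ CoveringSet r₂ s₂ 0 r₁ :=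
      ⟨⟨0, by ring, by ring⟩, le_refl _, le_of_lt hr⟩
    -- the point r₂ is covered by some interval of the covering set
    have hr2mem : r₂ ∈ Set.Ico 0 r₁ := ⟨Nat.zero_le _, hr⟩
    rw [hun] at hr2mem
    simp only [Set.mem_iUnion, Set.mem_Ico] at hr2mem
    obtain ⟨q, ⟨⟨k, hk1, hk2⟩, _, hqb⟩, hq1, hq2⟩ := hr2mem
    have hk0 : k ≠ 0 := by rintro rfl; omega
    have hne : ((0 : ℕ), r₂) ≠ q := by
      intro h
      have : q.1 = 0 := by rw [← h]
      have : k * s₂ = 0 := by omega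
      have : k = 0 ∨ s₂ = 0 := Nat.mul_eq_zero.mp this
      omega
    have hd := hdisj hp0 (⟨⟨k, hk1, hk2⟩, by omega, hqb⟩) hne
    -- disjointness forces r₂ ≤ k * s₂, hence k * s₂ = r₂
    have hks : k * s₂ = r₂ := by
      by_contra hlt
      have hklt : k * s₂ < r₂ := by omega
      have : (k * s₂ : ℕ) ∈ Set.Ico (0:ℕ) r₂ ∩ Set.Ico q.1 q.2 := by
        constructor
        · exact ⟨Nat.zero_le _, hklt⟩
        · exact ⟨by omega, by omega⟩
      exact (Set.disjoint_iff.mp hd this)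
    -- if k ≥ 2, use the interval starting at s₂ to get a contradiction
    have hrs : r₂ = s₂ := by
      rcases Nat.lt_or_ge k 2 with hk | hk
      · interval_cases k <;> omega
      · exfalso
        have h2r : r₂ + r₂ ≤ r₁ := by omega
        have hp1 : ((s₂ : ℕ), s₂ + r₂) ∈ CoveringSet r₂ s₂ 0 r₁ :=
          ⟨⟨1, by ring, by ring⟩, Nat.zero_le _, by omega⟩
        have hne1 : ((0 : ℕ), r₂) ≠ ((s₂ : ℕ), s₂ + r₂) := by
          intro h
          have : (0 : ℕ) = s₂ := congrArg Prod.fst h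
          omega
        have hd1 := hdisj hp0 hp1 hne1
        have hs2lt : s₂ < r₂ := by
          have : 2 * s₂ ≤ k * s₂ := Nat.mul_le_mul_right _ hk
          omega
        have : (s₂ : ℕ) ∈ Set.Ico (0:ℕ) r₂ ∩ Set.Ico (s₂:ℕ) (s₂ + r₂) :=
          ⟨⟨Nat.zero_le _, hs2lt⟩, ⟨le_refl _, by omega⟩⟩
        exact Set.disjoint_iff.mp hd1 this
    -- s₂ ∣ r₁ from the point r₁ - 1
    have hlast : (r₁ - 1 : ℕ) ∈ Set.Ico (0:ℕ) r₁ := ⟨Nat.zero_le _, by omega⟩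
    rw [hun] at hlast
    simp only [Set.mem_iUnion, Set.mem_Ico] at hlast
    obtain ⟨q', ⟨⟨l, hl1, hl2⟩, _, hq'b⟩, hq'1, hq'2⟩ := hlast
    have hsum : l * s₂ + r₂ = r₁ := by omega
    refine ⟨hdvd1, ⟨l + 1, ?_⟩, hrs⟩
    rw [hrs] at hsum
    rw [← hsum]; ring
  · rintro ⟨⟨c, hc⟩, ⟨d, hd⟩, rfl⟩
    have hd1 : 1 ≤ d := by
      rcases Nat.eq_zero_or_pos d with rfl | h
      · simp at hd; omega
      · exact h
    constructor
    · -- strictly covered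
      rintro a b ⟨m, rfl, rfl⟩
      constructor
      · refine ⟨m * s₁ + r₂, ⟨m * c, by rw [hc]; ring, by rw [hc]; ring⟩, by omega⟩
      · refine ⟨m * s₁ + r₁ - r₂, ⟨m * c + d - 1, ?_, ?_⟩, by omega⟩
        · have h1 : m * s₁ + r₁ = (m * c + d) * r₂ := by rw [hc, hd]; ring
          have h2 : (m * c + d - 1) * r₂ + r₂ = (m * c + d) * r₂ := by
            rw [Nat.sub_mul, Nat.one_mul]
            have h3 : 1 * r₂ ≤ (m * c + d) * r₂ := Nat.mul_le_mul_right _ (by omega)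
            omega
          omega
        · have h1 : m * s₁ + r₁ = (m * c + d) * r₂ := by rw [hc, hd]; ring
          have h2 : (m * c + d - 1) * r₂ + r₂ = (m * c + d) * r₂ := by
            rw [Nat.sub_mul, Nat.one_mul]
            have h3 : 1 * r₂ ≤ (m * c + d) * r₂ := Nat.mul_le_mul_right _ (by omega)
            omega
          omega
    · rintro a b ⟨m, rfl, rfl⟩
      constructor
      · -- pairwise disjoint
        rintro ⟨p1, p2⟩ ⟨⟨i, hi1, hi2⟩, _, _⟩ ⟨q1, q2⟩ ⟨⟨j, hj1, hj2⟩, _, _⟩ hne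
        simp only at hi1 hi2 hj1 hj2 ⊢
        have hij : i ≠ j := by
          rintro rfl
          exact hne (by simp [hi1, hi2, hj1, hj2])
        rw [Set.Ico_disjoint_Ico]
        rcases Nat.lt_or_ge i j with h | h
        · have : (i + 1) * r₂ ≤ j * r₂ := Nat.mul_le_mul_right _ h
          simp only [Nat.add_mul] at this
          omega
        · have hj : j < i := by omega
          have : (j + 1) * r₂ ≤ i * r₂ := Nat.mul_le_mul_right _ hj
          simp only [Nat.add_mul] at this
          omega
      · -- union
        ext x
        simp only [Set.mem_iUnion, Set.mem_Ico]
        constructor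
        · rintro ⟨hax, hxb⟩
          have hdm := Nat.div_add_mod x r₂
          have hmod : x % r₂ < r₂ := Nat.mod_lt x hs₂
          have hdm' : x / r₂ * r₂ + x % r₂ = x := by rw [Nat.mul_comm]; exact hdm
          refine ⟨(x / r₂ * r₂, x / r₂ * r₂ + r₂), ⟨⟨x / r₂, rfl, rfl⟩, ?_, ?_⟩, ?_, ?_⟩
          · have ha : m * s₁ = m * c * r₂ := by rw [hc]; ring
            have : m * c ≤ x / r₂ := by
              rw [Nat.le_div_iff_mul_le hs₂]; omega
            calc m * s₁ = m * c * r₂ := ha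
              _ ≤ x / r₂ * r₂ := Nat.mul_le_mul_right _ this
          · have hb : m * s₁ + r₁ = (m * c + d) * r₂ := by rw [hc, hd]; ring
            have hb' : m * s₁ + r₁ = (m * c) * r₂ + d * r₂ := by rw [hc, hd]; ring
            have hlt : x / r₂ < m * c + d := by
              by_contra h
              push_neg at h
              have : (m * c + d) * r₂ ≤ x / r₂ * r₂ := Nat.mul_le_mul_right _ h
              omega
            have : (x / r₂ + 1) * r₂ ≤ (m * c + d) * r₂ := Nat.mul_le_mul_right _ hlt
            simp only [Nat.add_mul] at this
            omega
          · omega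
          · omega
        · rintro ⟨p, ⟨_, hap, hpb⟩, hx1, hx2⟩
          omega
end

section
/- (Cost comparison of independent tumbling factor windows.) Let K ≥ 1 and let r_W, r_f, r'_f, r₁, ..., r_K, s₁, ..., s_K, R be positive integers such that r_W divides r_f and r'_f; r_f and r'_f divide each r_j; s_j divides r_j; and each r_j divides R. Define m_j = R/r_j, k_j = r_j/s_j, n_j = (m_j − 1)·k_j + 1, λ = Σ_{j=1}^{K} n_j/m_j, n_f = R/r_f, n'_f = R/r'_f, and the costs c_f = Σ_{j=1}^{K} n_j·(r_j/r_f) + n_f·(r_f/r_W) and c'_f = Σ_{j=1}^{K} n_j·(r_j/r'_f) + n'_f·(r'_f/r_W). If λ > r'_f/r_W, then c_f ≤ c'_f if and only if r_f·(λ − r'_f/r_W) ≥ r'_f·(λ − r_f/r_W), i.e., r_f/r'_f ≥ (λ − r_f/r_W)/(λ − r'_f/r_W). -/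
/-! Since `m_j · r_j = R`, each sub-aggregate term is `n_j · r_j / r_f = (R / r_f) · n_j / m_j`, and
`n_f · r_f = R`; so a plan's cost is `(R / r_f) · λ + R / r_W`. The constant `R / r_W` is common to both
plans, hence `c_f ≤ c'_f` iff `r'_f ≤ r_f`. The same holds for the cross-multiplied inequality, whose
two sides differ by `(r_f − r'_f) · λ`. -/

section Field

variable {F : Type*} [Field F]

theorem Finset.sum_mul_div_eq_div_mul_sum_div {ι : Type*} (s : Finset ι) (n m r : ι → F)
    {R : F} (x : F) (hmr : ∀ j ∈ s, m j * r j = R) (hm : ∀ j ∈ s, m j ≠ 0) :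
    ∑ j ∈ s, n j * (r j / x) = R / x * ∑ j ∈ s, n j / m j := by
  rw [Finset.mul_sum]
  refine Finset.sum_congr rfl fun j hj => ?_
  have := hm j hj
  rw [← hmr j hj]
  field_simp

theorem factor_plan_cost_eq {ι : Type*} [Fintype ι] (n m r : ι → F) {R : F} (x w nf : F)
    (hmr : ∀ j, m j * r j = R) (hm : ∀ j, m j ≠ 0) (hnf : nf * x = R) :
    ∑ j, n j * (r j / x) + nf * (x / w) = R / x * ∑ j, n j / m j + R / w := by
  rw [Finset.sum_mul_div_eq_div_mul_sum_div _ n m r x (fun j _ => hmr j) (fun j _ => hm j),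
    ← mul_div_assoc, hnf]

end Field

section LinearOrderedField

variable {F : Type*} [Field F] [LinearOrder F] [IsStrictOrderedRing F]

theorem div_mul_add_le_div_mul_add_iff {R a b lam : F} (c : F) (hR : 0 < R) (ha : 0 < a)
    (hb : 0 < b) (hlam : 0 < lam) : R / a * lam + c ≤ R / b * lam + c ↔ b ≤ a := by
  rw [add_le_add_iff_right, mul_le_mul_iff_of_pos_right hlam, div_le_div_iff_of_pos_left hR ha hb]

theorem mul_sub_div_le_mul_sub_div_iff {a b lam : F} (w : F) (hlam : 0 < lam) :
    b * (lam - a / w) ≤ a * (lam - b / w) ↔ b ≤ a := by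
  rw [← sub_nonneg, show a * (lam - b / w) - b * (lam - a / w) = (a - b) * lam by ring,
    mul_nonneg_iff_of_pos_right hlam, sub_nonneg]

end LinearOrderedField

theorem independent_factor_window_cost_compare_general
    (K : ℕ) (hK : 1 ≤ K)
    (rW rf rf' R : ℕ) (r : Fin K → ℕ)
    (hrf : 0 < rf) (hrf' : 0 < rf') (hR : 0 < R)
    (df : ∀ j, rf ∣ r j) (df' : ∀ j, rf' ∣ r j)
    (drR : ∀ j, r j ∣ R)
    (m n : Fin K → ℕ)
    (hm : ∀ j, m j = R / r j)
    (lam : ℚ) (hlam : lam = ∑ j, (n j : ℚ) / (m j : ℚ))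
    (nf nf' : ℕ) (hnf : nf = R / rf) (hnf' : nf' = R / rf')
    (cf cf' : ℚ)
    (hcf : cf = (∑ j, (n j : ℚ) * ((r j : ℚ) / (rf : ℚ)))
        + (nf : ℚ) * ((rf : ℚ) / (rW : ℚ)))
    (hcf' : cf' = (∑ j, (n j : ℚ) * ((r j : ℚ) / (rf' : ℚ)))
        + (nf' : ℚ) * ((rf' : ℚ) / (rW : ℚ)))
    (hpos : (rf' : ℚ) / (rW : ℚ) < lam) :
    (cf ≤ cf' ↔
      (rf' : ℚ) * (lam - (rf : ℚ) / (rW : ℚ))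
        ≤ (rf : ℚ) * (lam - (rf' : ℚ) / (rW : ℚ))) ∧
    (cf ≤ cf' ↔
      (lam - (rf : ℚ) / (rW : ℚ)) / (lam - (rf' : ℚ) / (rW : ℚ))
        ≤ (rf : ℚ) / (rf' : ℚ)) := by
  have hlam_pos : 0 < lam := (div_nonneg rf'.cast_nonneg rW.cast_nonneg).trans_lt hpos
  have cast_div_mul {d : ℕ} (h : d ∣ R) : ((R / d : ℕ) : ℚ) * d = R := by
    rw [← Nat.cast_mul, Nat.div_mul_cancel h]
  have hmr : ∀ j, (m j : ℚ) * r j = R := fun j => hm j ▸ cast_div_mul (drR j)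
  have hm0 : ∀ j, (m j : ℚ) ≠ 0 := fun j h =>
    Nat.cast_ne_zero.mpr hR.ne' (by rw [← hmr j, h, zero_mul])
  have plan_cost {x nx : ℕ} (hx : x ∣ r ⟨0, hK⟩) (hnx : nx = R / x) :
      ∑ j, (n j : ℚ) * (r j / x) + nx * (x / rW) = R / x * lam + R / rW :=
    hlam ▸ factor_plan_cost_eq _ _ _ _ _ _ hmr hm0 (hnx ▸ cast_div_mul (hx.trans (drR _)))
  have hcost : cf ≤ cf' ↔ (rf' : ℚ) ≤ rf := by
    rw [hcf, hcf', plan_cost (df _) hnf, plan_cost (df' _) hnf']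
    exact div_mul_add_le_div_mul_add_iff _ (by exact_mod_cast hR) (by exact_mod_cast hrf)
      (by exact_mod_cast hrf') hlam_pos
  have hcross := mul_sub_div_le_mul_sub_div_iff (a := (rf : ℚ)) (b := (rf' : ℚ)) (rW : ℚ) hlam_pos
  refine ⟨hcost.trans hcross.symm, hcost.trans (hcross.symm.trans ?_)⟩
  rw [div_le_div_iff₀ (sub_pos.mpr hpos) (by exact_mod_cast hrf'), mul_comm]

/-- Cost comparison of independent tumbling factor windows: with
`c_f = Σ_j n_j·(r_j/r_f) + n_f·(r_f/r_W)` and `c'_f = Σ_j n_j·(r_j/r'_f) + n'_f·(r'_f/r_W)`,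
if `λ > r'_f/r_W` then `c_f ≤ c'_f` iff `r_f·(λ − r'_f/r_W) ≥ r'_f·(λ − r_f/r_W)`,
i.e. iff `r_f/r'_f ≥ (λ − r_f/r_W)/(λ − r'_f/r_W)`. -/
theorem independent_factor_window_cost_compare
    (K : ℕ) (hK : 1 ≤ K)
    (rW rf rf' R : ℕ) (r s : Fin K → ℕ)
    (hrW : 0 < rW) (hrf : 0 < rf) (hrf' : 0 < rf') (hR : 0 < R)
    (hr : ∀ j, 0 < r j) (hs : ∀ j, 0 < s j)
    (dW : rW ∣ rf) (dW' : rW ∣ rf')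
    (df : ∀ j, rf ∣ r j) (df' : ∀ j, rf' ∣ r j)
    (dsr : ∀ j, s j ∣ r j) (drR : ∀ j, r j ∣ R)
    (m k n : Fin K → ℕ)
    (hm : ∀ j, m j = R / r j) (hk : ∀ j, k j = r j / s j)
    (hn : ∀ j, n j = (m j - 1) * k j + 1)
    (lam : ℚ) (hlam : lam = ∑ j, (n j : ℚ) / (m j : ℚ))
    (nf nf' : ℕ) (hnf : nf = R / rf) (hnf' : nf' = R / rf')
    (cf cf' : ℚ)
    (hcf : cf = (∑ j, (n j : ℚ) * ((r j : ℚ) / (rf : ℚ)))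
        + (nf : ℚ) * ((rf : ℚ) / (rW : ℚ)))
    (hcf' : cf' = (∑ j, (n j : ℚ) * ((r j : ℚ) / (rf' : ℚ)))
        + (nf' : ℚ) * ((rf' : ℚ) / (rW : ℚ)))
    (hpos : (rf' : ℚ) / (rW : ℚ) < lam) :
    (cf ≤ cf' ↔
      (rf' : ℚ) * (lam - (rf : ℚ) / (rW : ℚ))
        ≤ (rf : ℚ) * (lam - (rf' : ℚ) / (rW : ℚ))) ∧
    (cf ≤ cf' ↔
      (lam - (rf : ℚ) / (rW : ℚ)) / (lam - (rf' : ℚ) / (rW : ℚ))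
        ≤ (rf : ℚ) / (rf' : ℚ)) :=
  independent_factor_window_cost_compare_general K hK rW rf rf' R r hrf hrf' hR df df' drR m n hm
    lam hlam nf nf' hnf hnf' cf cf' hcf hcf' hpos
end
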